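/- For the star graph K_{1,n−1} on n vertices with hub vertex 1, adjacency matrix A_n, and cos θ_{pq}(K_{1,n−1}) = (e^{A_n})_{pq}/√((e^{A_n})_{pp}(e^{A_n})_{qq}), the cosine of the communicability angle between any two distinct vertices tends to 1 as n → ∞: for the hub–leaf pairs, lim_{n→∞} cos θ_{1q}(K_{1,n−1}) = 1, and for pairs of distinct leaves, lim_{n→∞} cos θ_{pq}(K_{1,n−1}) = 1. Hence the communicability angle attains its lower bound 0° in the limit. -/

import Mathlib

/-!
The adjacency matrix `A` of `K_{1,m}` satisfies `A³ = m A`, so the exponential series collapses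
to `e^A = 1 + ((cosh √m - 1) / m) A² + (sinh √m / √m) A`. With `D = (cosh √m - 1) / m`, the
leaf–leaf cosine is `D / (1 + D)`, and `cosh² - sinh² = 1` turns the squared hub–leaf cosine into
`D (m D + 2) / ((1 + m D) (1 + D))`. Both tend to `1` because `D ≥ 1/2 + m/24 → ∞`.
-/

open Matrix Filter Topology

/-- The adjacency matrix of the star graph `K_{1,n−1}` on vertex set `{1, …, n}` (vertex `p`
is represented by the index `p - 1 : Fin n`): the hub, vertex `1` (index `0`), is adjacent
to every other vertex and there are no other edges. -/
def starAdj (n : ℕ) : Matrix (Fin n) (Fin n) ℝ :=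
  Matrix.of fun p q => if (p.1 = 0 ∧ q.1 ≠ 0) ∨ (q.1 = 0 ∧ p.1 ≠ 0) then 1 else 0

/-- The cosine of the communicability angle of the star graph `K_{1,n−1}`:
`cos θ_{pq} = G_{pq}/√(G_{pp} G_{qq})` with `G = e^A`. -/
noncomputable def starCos (n : ℕ) (p q : Fin n) : ℝ :=
  NormedSpace.exp (starAdj n) p q
    / Real.sqrt (NormedSpace.exp (starAdj n) p p * NormedSpace.exp (starAdj n) q q)

open scoped Nat

/-- For `m > 0`, `sinhSeries m = sinh √m / √m` and `coshSeries m = (cosh √m - 1) / m`; as power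
series in `m` they need neither square roots nor a case split at `m = 0`. -/
noncomputable def sinhSeries (m : ℝ) : ℝ := ∑' k : ℕ, m ^ k / (2 * k + 1)!

noncomputable def coshSeries (m : ℝ) : ℝ := ∑' k : ℕ, m ^ k / (2 * k + 2)!

lemma summable_pow_div_factorial_two_mul_add (m : ℝ) (c : ℕ) :
    Summable fun k : ℕ => m ^ k / (2 * k + c)! := by
  refine (Real.summable_pow_div_factorial |m|).of_norm_bounded fun k => ?_
  rw [norm_div, norm_pow, Real.norm_eq_abs, Real.norm_natCast]
  gcongr
  omega

lemma hasSum_sinhSeries (m : ℝ) :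
    HasSum (fun k : ℕ => m ^ k / (2 * k + 1)!) (sinhSeries m) :=
  (summable_pow_div_factorial_two_mul_add m 1).hasSum

lemma hasSum_coshSeries (m : ℝ) :
    HasSum (fun k : ℕ => m ^ k / (2 * k + 2)!) (coshSeries m) :=
  (summable_pow_div_factorial_two_mul_add m 2).hasSum

lemma sinhSeries_nonneg {m : ℝ} (hm : 0 ≤ m) : 0 ≤ sinhSeries m :=
  tsum_nonneg fun _ => by positivity

lemma le_coshSeries {m : ℝ} (hm : 0 ≤ m) : 1 / 2 + m / 24 ≤ coshSeries m := by
  have h := sum_le_hasSum (Finset.range 2) (fun _ _ => by positivity) (hasSum_coshSeries m)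
  norm_num [Finset.sum_range_succ, Nat.factorial] at h
  linarith

lemma coshSeries_pos {m : ℝ} (hm : 0 ≤ m) : 0 < coshSeries m := by
  linarith [le_coshSeries hm]

lemma sinh_sqrt_eq_mul_sinhSeries {m : ℝ} (hm : 0 ≤ m) : Real.sinh √m = √m * sinhSeries m := by
  have h := (hasSum_sinhSeries m).mul_left √m
  have hterm (k : ℕ) : √m * (m ^ k / (2 * k + 1)!) = √m ^ (2 * k + 1) / (2 * k + 1)! := by
    rw [pow_succ, pow_mul, Real.sq_sqrt hm]
    ring
  simp only [hterm] at h
  exact (Real.hasSum_sinh √m).unique h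

lemma cosh_sqrt_eq_one_add_mul_coshSeries {m : ℝ} (hm : 0 ≤ m) :
    Real.cosh √m = 1 + m * coshSeries m := by
  have h := (hasSum_coshSeries m).mul_left m
  have hterm (k : ℕ) : m * (m ^ k / (2 * k + 2)!) = √m ^ (2 * (k + 1)) / (2 * (k + 1))! := by
    rw [pow_mul, Real.sq_sqrt hm, pow_succ]
    ring_nf
  simp only [hterm] at h
  simpa using (Real.hasSum_cosh √m).unique h.zero_add

lemma sinhSeries_sq {m : ℝ} (hm : 0 < m) :
    sinhSeries m ^ 2 = coshSeries m * (m * coshSeries m + 2) := by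
  have h := Real.cosh_sq_sub_sinh_sq √m
  rw [cosh_sqrt_eq_one_add_mul_coshSeries hm.le, sinh_sqrt_eq_mul_sinhSeries hm.le, mul_pow,
    Real.sq_sqrt hm.le] at h
  apply mul_left_cancel₀ hm.ne'
  linear_combination -h

section CubicElement

variable {𝔸 : Type*} [Ring 𝔸] [Algebra ℝ 𝔸] {A : 𝔸} {m : ℝ}

lemma pow_two_mul_add_one_of_pow_three (hA : A ^ 3 = m • A) (k : ℕ) :
    A ^ (2 * k + 1) = m ^ k • A := by
  induction k with
  | zero => simp
  | succ k ih =>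
    rw [show 2 * (k + 1) + 1 = 2 * k + 1 + 2 by ring, pow_add, ih, smul_mul_assoc, ← pow_succ',
      hA, smul_smul, pow_succ]

lemma pow_two_mul_add_two_of_pow_three (hA : A ^ 3 = m • A) (k : ℕ) :
    A ^ (2 * k + 2) = m ^ k • A ^ 2 := by
  rw [pow_succ, pow_two_mul_add_one_of_pow_three hA, smul_mul_assoc, ← sq]

variable [TopologicalSpace 𝔸] [IsTopologicalRing 𝔸] [ContinuousSMul ℝ 𝔸] [T2Space 𝔸]

theorem exp_eq_of_pow_three_eq_smul (hA : A ^ 3 = m • A) :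
    NormedSpace.exp A = 1 + coshSeries m • A ^ 2 + sinhSeries m • A := by
  have hodd := (hasSum_sinhSeries m).smul_const A
  have hoddterm (k : ℕ) : (m ^ k / (2 * k + 1)!) • A = ((2 * k + 1)! : ℝ)⁻¹ • A ^ (2 * k + 1) := by
    rw [pow_two_mul_add_one_of_pow_three hA, smul_smul, div_eq_inv_mul]
  have heven := (hasSum_coshSeries m).smul_const (A ^ 2)
  have heventerm (k : ℕ) :
      (m ^ k / (2 * k + 2)!) • A ^ 2 = ((2 * (k + 1))! : ℝ)⁻¹ • A ^ (2 * (k + 1)) := by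
    rw [mul_add_one, pow_two_mul_add_two_of_pow_three hA, smul_smul, div_eq_inv_mul]
  simp only [hoddterm] at hodd
  simp only [heventerm] at heven
  have heven' := heven.zero_add (f := fun k : ℕ => ((2 * k)! : ℝ)⁻¹ • A ^ (2 * k))
  simp only [mul_zero, Nat.factorial_zero, Nat.cast_one, inv_one, pow_zero, one_smul] at heven'
  rw [NormedSpace.exp_eq_tsum ℝ]
  -- `f` is explicit: recovering it from `f (2 * k)` and `f (2 * k + 1)` is higher-order unification
  exact (heven'.even_add_odd (f := fun n : ℕ => (n ! : ℝ)⁻¹ • A ^ n) hodd).tsum_eq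

end CubicElement

lemma starAdj_sq (m : ℕ) : starAdj (m + 1) ^ 2 =
    of fun p q => if p = 0 ∧ q = 0 then (m : ℝ) else if p ≠ 0 ∧ q ≠ 0 then 1 else 0 := by
  ext p q
  rw [sq, mul_apply, Fin.sum_univ_succ]
  by_cases hp : p = 0 <;> by_cases hq : q = 0 <;> simp [starAdj, hp, hq]

lemma starAdj_pow_three (m : ℕ) : starAdj (m + 1) ^ 3 = (m : ℝ) • starAdj (m + 1) := by
  ext p q
  rw [pow_succ, starAdj_sq, mul_apply, Fin.sum_univ_succ]
  by_cases hp : p = 0 <;> by_cases hq : q = 0 <;> simp [starAdj, hp, hq]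

lemma exp_starAdj (m : ℕ) : NormedSpace.exp (starAdj (m + 1)) =
    1 + coshSeries m • starAdj (m + 1) ^ 2 + sinhSeries m • starAdj (m + 1) :=
  exp_eq_of_pow_three_eq_smul (starAdj_pow_three m)

lemma starCos_zero_of_ne_zero {m : ℕ} {q : Fin (m + 1)} (hq : q ≠ 0) :
    starCos (m + 1) 0 q = sinhSeries m / √((1 + m * coshSeries m) * (1 + coshSeries m)) := by
  rw [starCos, exp_starAdj, starAdj_sq]
  simp [starAdj, one_apply, hq, hq.symm, mul_comm]

lemma starCos_of_ne_zero {m : ℕ} {p q : Fin (m + 1)} (hp : p ≠ 0) (hq : q ≠ 0) (hpq : p ≠ q) :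
    starCos (m + 1) p q = coshSeries m / (1 + coshSeries m) := by
  rw [starCos, exp_starAdj, starAdj_sq]
  have hD : 0 ≤ 1 + coshSeries m := by linarith [coshSeries_pos m.cast_nonneg]
  simp [starAdj, one_apply, hp, hq, hpq, Real.sqrt_mul_self hD]

lemma tendsto_add_div_add_of_tendsto_atTop {α : Type*} {l : Filter α} {f : α → ℝ}
    (hf : Tendsto f l atTop) (a b : ℝ) : Tendsto (fun t => (f t + a) / (f t + b)) l (𝓝 1) := by
  have h : Tendsto (fun t => 1 + (a - b) * (f t + b)⁻¹) l (𝓝 1) := by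
    simpa using ((tendsto_inv_atTop_zero.comp
      (tendsto_atTop_add_const_right _ b hf)).const_mul (a - b)).const_add 1
  refine h.congr' ?_
  filter_upwards [hf.eventually_gt_atTop (-b)] with t ht
  have : f t + b ≠ 0 := by linarith
  field_simp
  ring

lemma tendsto_coshSeries_atTop : Tendsto coshSeries atTop atTop := by
  refine tendsto_atTop_mono' _ ?_ <|
    tendsto_atTop_add_const_left _ (1 / 2) (tendsto_id.atTop_div_const (by norm_num : (0 : ℝ) < 24))
  filter_upwards [eventually_ge_atTop 0] with m hm
  exact le_coshSeries hm

lemma sinhSeries_div_sqrt {m : ℝ} (hm : 0 < m) :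
    sinhSeries m / √((1 + m * coshSeries m) * (1 + coshSeries m)) =
      √(coshSeries m / (coshSeries m + 1) * ((m * coshSeries m + 2) / (m * coshSeries m + 1))) := by
  rw [← Real.sqrt_sq (sinhSeries_nonneg hm.le), sinhSeries_sq hm, ← Real.sqrt_div' _ (by
    have := coshSeries_pos hm.le; positivity)]
  congr 1
  field_simp
  ring

lemma tendsto_starCos_hub_leaf : Tendsto (fun n : ℕ => starCos (n + 3) 0 1) atTop (𝓝 1) := by
  have hm : Tendsto (fun n : ℕ => ((n + 2 : ℕ) : ℝ)) atTop atTop :=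
    tendsto_natCast_atTop_atTop.comp (tendsto_add_atTop_nat 2)
  have hx := tendsto_coshSeries_atTop.comp hm
  have hy := hm.atTop_mul_atTop₀ hx
  have h := ((tendsto_add_div_add_of_tendsto_atTop hx 0 1).mul
    (tendsto_add_div_add_of_tendsto_atTop hy 2 1)).sqrt
  rw [one_mul, Real.sqrt_one] at h
  refine h.congr fun n => ?_
  rw [starCos_zero_of_ne_zero one_ne_zero, sinhSeries_div_sqrt (by positivity)]
  simp

lemma tendsto_starCos_leaf_leaf : Tendsto (fun n : ℕ => starCos (n + 3) 1 2) atTop (𝓝 1) := by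
  have hx := tendsto_coshSeries_atTop.comp
    (tendsto_natCast_atTop_atTop.comp (tendsto_add_atTop_nat 2))
  refine (tendsto_add_div_add_of_tendsto_atTop hx 0 1).congr fun n => ?_
  rw [starCos_of_ne_zero one_ne_zero two_ne_zero (by simp [Fin.ext_iff, Nat.mod_eq_of_lt])]
  simp [add_comm]

/-- In the star graph `K_{1,n−1}` the cosine of the communicability angle
between any two distinct vertices tends to `1` as `n → ∞` (by symmetry, it only depends on
whether the pair contains the hub): both for a hub–leaf pair and for a pair of distinct
leaves. Hence the communicability angle attains its lower bound `0°` in the limit. -/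
theorem star_graph_cos_angle_limit :
    Tendsto (fun n : ℕ =>
        starCos (n + 3) ⟨0, by omega⟩ ⟨1, by omega⟩) atTop (𝓝 1) ∧
    Tendsto (fun n : ℕ =>
        starCos (n + 3) ⟨1, by omega⟩ ⟨2, by omega⟩) atTop (𝓝 1) := by
  exact ⟨tendsto_starCos_hub_leaf, tendsto_starCos_leaf_leaf⟩
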